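/- Let R : X ⇸ Y be a total and surjective relation (every x ∈ X has some y with x R y, and every y ∈ Y has some x with x R y). Then for every lax M-lifting L of the monotone neighbourhood functor M, one has M̃ R ⊆ L R. -/

import Mathlib

universe u v

open CategoryTheory

/-- Relation composition (removed from Mathlib; old meaning). -/
def Rel.comp {α β γ : Type*} (r : Rel α β) (s : Rel β γ) : Rel α γ :=
  fun x z => ∃ y, r x y ∧ s y z

/-- Inverse relation (removed from Mathlib; old meaning). -/
def Rel.inv {α β : Type*} (r : Rel α β) : Rel β α := flip r

/-- The graph of a function, as a relation. -/
def gr {X Y : Type u} (f : X → Y) : Rel X Y := fun x y => f x = y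

/-- A lax lifting of an endofunctor `F` on `Set` to relations: monotone, laxly
functorial, and laxly extending graphs and converse graphs. -/
structure LaxLifting (F : Type u ⥤ Type u) : Type (u + 1) where
  map : ∀ {X Y : Type u}, Rel X Y → Rel (F.obj X) (F.obj Y)
  mono : ∀ {X Y : Type u} {R S : Rel X Y}, R ≤ S → map R ≤ map S
  laxComp : ∀ {X Y Z : Type u} (R : Rel X Y) (S : Rel Y Z),
    (map R).comp (map S) ≤ map (R.comp S)
  graph_le : ∀ {X Y : Type u} (f : X → Y), gr ⇑(F.map (TypeCat.ofHom f)) ≤ map (gr f)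
  graphInv_le : ∀ {X Y : Type u} (f : X → Y), (gr ⇑(F.map (TypeCat.ofHom f))).inv ≤ map (gr f).inv

/-- Pointwise order on lax liftings. -/
def LiftLE {F : Type u ⥤ Type u} (L L' : LaxLifting F) : Prop :=
  ∀ (X Y : Type u) (R : Rel X Y), L.map R ≤ L'.map R

/-- The monotone neighbourhood functor: \`M X\` is the set of upward-closed
collections of subsets of \`X\`. -/
def MFunctor : Type u ⥤ Type u where
  obj X := {U : Set (Set X) // ∀ u u' : Set X, u ∈ U → u ⊆ u' → u' ∈ U}
  map f := TypeCat.ofHom fun U => ⟨{v | ⇑f ⁻¹' v ∈ U.1}, fun v v' hv hsub =>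
    U.2 _ _ hv (Set.preimage_mono hsub)⟩
  map_id X := rfl
  map_comp f g := rfl

/-- The lifting \`M̃\` of the monotone neighbourhood functor. -/
def Mtilde {X Y : Type u} (R : Rel X Y) :
    Rel (MFunctor.obj X) (MFunctor.obj Y) := fun U V =>
  (∀ u ∈ U.1, ∃ v ∈ V.1, ∀ y ∈ v, ∃ x ∈ u, R x y) ∧
  (∀ v ∈ V.1, ∃ u ∈ U.1, ∀ x ∈ u, ∃ y ∈ v, R x y)

/-!
Present `R` as the span `X ← Z → Y` of the two projections of `Z = {(x, y) | x R y}`,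
so that `R = (gr π₁)° ; gr π₂`. Lax functoriality and the two lifting axioms then give
`L R U V` as soon as some `W ∈ M Z` satisfies `M π₁ W = U` and `M π₂ W = V`. For `(U, V) ∈ M̃ R`
take for `W` the upward closure of `{π₁⁻¹ u | u ∈ U} ∪ {π₂⁻¹ v | v ∈ V}`: totality and
surjectivity make `π₁`, `π₂` surjective, which handles the pullbacks along the same leg, and the
two clauses of `M̃ R` handle the pullbacks along the other leg.
-/

theorem LaxLifting.map_of_span {F : Type u ⥤ Type u} (L : LaxLifting F) {X Y Z : Type u}
    {R : Rel X Y} {f : Z → X} {g : Z → Y} (hR : (gr f).inv.comp (gr g) ≤ R)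
    {U : F.obj X} {V : F.obj Y} (W : F.obj Z)
    (hf : F.map (TypeCat.ofHom f) W = U) (hg : F.map (TypeCat.ofHom g) W = V) :
    L.map R U V :=
  L.mono hR _ _ <| L.laxComp _ _ _ _ ⟨W, L.graphInv_le f U W hf, L.graph_le g W V hg⟩

namespace MFunctor

variable {X Y Z : Type u}

def span (f : Z → X) (g : Z → Y) (U : MFunctor.obj X) (V : MFunctor.obj Y) :
    MFunctor.obj Z :=
  ⟨{w | (∃ u ∈ U.1, f ⁻¹' u ⊆ w) ∨ (∃ v ∈ V.1, g ⁻¹' v ⊆ w)}, by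
    rintro w w' (⟨u, hu, hsub⟩ | ⟨v, hv, hsub⟩) hww'
    · exact Or.inl ⟨u, hu, hsub.trans hww'⟩
    · exact Or.inr ⟨v, hv, hsub.trans hww'⟩⟩

theorem span_comm (f : Z → X) (g : Z → Y) (U : MFunctor.obj X) (V : MFunctor.obj Y) :
    span f g U V = span g f V U :=
  Subtype.ext <| Set.ext fun _ => or_comm

theorem map_span_left {f : Z → X} (hf : Function.Surjective f) (g : Z → Y)
    {U : MFunctor.obj X} {V : MFunctor.obj Y} (hV : ∀ v ∈ V.1, ∃ u ∈ U.1, u ⊆ f '' (g ⁻¹' v)) :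
    MFunctor.map (TypeCat.ofHom f) (span f g U V) = U := by
  refine Subtype.ext <| Set.ext fun u => ⟨?_, fun hu => Or.inl ⟨u, hu, subset_rfl⟩⟩
  rintro (⟨u', hu', hsub⟩ | ⟨v, hv, hsub⟩)
  · exact U.2 u' u hu' <| (Set.preimage_subset_preimage_iff (by simp [hf.range_eq])).1 hsub
  · obtain ⟨u', hu', hu'v⟩ := hV v hv
    exact U.2 u' u hu' <| hu'v.trans <| Set.image_subset_iff.2 hsub

theorem map_span_right (f : Z → X) {g : Z → Y} (hg : Function.Surjective g)
    {U : MFunctor.obj X} {V : MFunctor.obj Y} (hU : ∀ u ∈ U.1, ∃ v ∈ V.1, v ⊆ g '' (f ⁻¹' u)) :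
    MFunctor.map (TypeCat.ofHom g) (span f g U V) = V := by
  rw [span_comm]
  exact map_span_left hg f hU

end MFunctor

/-- For a total surjective relation `R`, `M̃ R` is below `L R` for every lax
lifting `L` of the monotone neighbourhood functor. -/
theorem Mtilde_le_of_total_surjective {X Y : Type u} (R : Rel X Y)
    (htot : ∀ x : X, ∃ y : Y, R x y) (hsur : ∀ y : Y, ∃ x : X, R x y)
    (L : LaxLifting MFunctor) :
    Mtilde R ≤ L.map R := by
  rintro U V ⟨hUV, hVU⟩
  let fst : {p : X × Y // R p.1 p.2} → X := fun p => p.1.1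
  let snd : {p : X × Y // R p.1 p.2} → Y := fun p => p.1.2
  have hfst : Function.Surjective fst := fun x => (htot x).elim fun y h => ⟨⟨(x, y), h⟩, rfl⟩
  have hsnd : Function.Surjective snd := fun y => (hsur y).elim fun x h => ⟨⟨(x, y), h⟩, rfl⟩
  have hspan : (gr fst).inv.comp (gr snd) ≤ R := by
    rintro _ _ ⟨p, rfl, rfl⟩
    exact p.2
  refine L.map_of_span hspan (MFunctor.span fst snd U V)
    (MFunctor.map_span_left hfst snd fun v hv => ?_)
    (MFunctor.map_span_right fst hsnd fun u hu => ?_)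
  · obtain ⟨u, hu, hmatch⟩ := hVU v hv
    refine ⟨u, hu, fun x hx => ?_⟩
    obtain ⟨y, hy, hxy⟩ := hmatch x hx
    exact ⟨⟨(x, y), hxy⟩, hy, rfl⟩
  · obtain ⟨v, hv, hmatch⟩ := hUV u hu
    refine ⟨v, hv, fun y hy => ?_⟩
    obtain ⟨x, hx, hxy⟩ := hmatch y hy
    exact ⟨⟨(x, y), hxy⟩, hx, rfl⟩
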